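/- Let G^N be a symmetric probability measure on E^N and 1 ≤ j ≤ 1 + N/2. Let Ĝ^N_j be the j-th moment measure of the empirical law, i.e. the measure defined by ⟨Ĝ^N_j, φ⟩ = ∫_{E^N} ⟨(μ^N_X)^{⊗j}, φ⟩ G^N(dX) where μ^N_X = N^{-1} Σ δ_{x_i}. Then the total variation distance satisfies ‖G^N_j − Ĝ^N_j‖_{TV} ≤ 2 j(j−1)/N. -/

import Mathlib

open MeasureTheory ENNReal

noncomputable section

/-- Empirical measure `μ^N_X = (1/N) Σᵢ δ_{xᵢ}`. -/
def empMeas {α : Type*} [MeasurableSpace α] {N : ℕ} (X : Fin N → α) : Measure α :=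
  (N : ℝ≥0∞)⁻¹ • ∑ i, Measure.dirac (X i)

/-- Marginal on the first `j` coordinates. -/
def marg (d N j : ℕ) (h : j ≤ N) (F : Measure (Fin N → EuclideanSpace ℝ (Fin d))) :
    Measure (Fin j → EuclideanSpace ℝ (Fin d)) :=
  F.map (fun X => fun i : Fin j => X (Fin.castLE h i))

/-- Total variation distance (with the convention `‖μ−ν‖_TV = sup_{‖φ‖∞≤1} ⟨μ−ν,φ⟩`,
which for measures of equal mass equals `2 sup_s |μ(s)−ν(s)|`). -/
def tvDist {Ω : Type*} [MeasurableSpace Ω] (μ ν : Measure Ω) : ℝ≥0∞ :=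
  2 * ⨆ (s : Set Ω) (_ : MeasurableSet s), max (μ s - ν s) (ν s - μ s)

/-!
Expanding the product `(μ^N_X)^{⊗j}` gives `Ĝ^N_j = N^{-j} Σ_f law(X ∘ f)`, the sum running over
all maps `f : Fin j → Fin N`. By symmetry of `G^N`, every injective `f` contributes exactly
`G^N_j`, so the two measures differ only through the non-injective maps, and at most a fraction
`j(j-1)/N` of all maps is non-injective.
-/

open Function Finset

section EmpiricalMeasure

variable {α : Type*} [MeasurableSpace α] {N : ℕ}

lemma empMeas_apply (X : Fin N → α) {s : Set α} (hs : MeasurableSet s) :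
    empMeas X s = (N : ℝ≥0∞)⁻¹ * ∑ i, s.indicator 1 (X i) := by
  simp [empMeas, Measure.dirac_apply' _ hs]

instance (X : Fin N → α) : IsFiniteMeasure (empMeas X) := by
  refine ⟨?_⟩
  rw [empMeas_apply X .univ]
  rcases eq_or_ne N 0 with rfl | hN
  · simp
  · simp [ENNReal.inv_mul_cancel, hN]

lemma pi_empMeas (j : ℕ) (X : Fin N → α) :
    Measure.pi (fun _ : Fin j => empMeas X) =
      (N : ℝ≥0∞)⁻¹ ^ j • ∑ f : Fin j → Fin N, Measure.dirac (X ∘ f) := by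
  refine Measure.pi_eq (μ := fun _ : Fin j => empMeas X) fun s hs => ?_
  have hdirac : ∀ f : Fin j → Fin N,
      Measure.dirac (X ∘ f) (Set.univ.pi s) = ∏ k, (s k).indicator 1 (X (f k)) := fun f => by
    rw [Measure.dirac_apply' _ (.univ_pi hs), ← coe_univ, Set.indicator_pi_one_apply]
    rfl
  simp_rw [Measure.smul_apply, Measure.finsetSum_apply, hdirac, empMeas_apply X (hs _),
    prod_mul_distrib, prod_const, card_univ, Fintype.card_fin, prod_univ_sum, Fintype.piFinset_univ,
    smul_eq_mul]

lemma pi_empMeas_apply (j : ℕ) (X : Fin N → α) {s : Set (Fin j → α)} (hs : MeasurableSet s) :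
    Measure.pi (fun _ : Fin j => empMeas X) s =
      (N : ℝ≥0∞)⁻¹ ^ j * ∑ f : Fin j → Fin N, s.indicator 1 (X ∘ f) := by
  simp [pi_empMeas, Measure.dirac_apply' _ hs]

lemma measurable_pi_empMeas (j : ℕ) :
    Measurable fun X : Fin N → α => Measure.pi fun _ : Fin j => empMeas X :=
  Measure.measurable_of_measurable_coe _ fun s hs => by
    simp_rw [pi_empMeas_apply j _ hs]
    fun_prop

lemma bind_pi_empMeas_apply (G : Measure (Fin N → α)) (j : ℕ) {s : Set (Fin j → α)}
    (hs : MeasurableSet s) :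
    (G.bind fun X => Measure.pi fun _ : Fin j => empMeas X) s =
      (N : ℝ≥0∞)⁻¹ ^ j * ∑ f : Fin j → Fin N, G.map (· ∘ f) s := by
  have hf : ∀ f : Fin j → Fin N, Measurable fun X : Fin N → α => X ∘ f := fun f => by fun_prop
  simp_rw [Measure.bind_apply hs (measurable_pi_empMeas j).aemeasurable, pi_empMeas_apply j _ hs]
  rw [lintegral_const_mul _ (by fun_prop), lintegral_finsetSum _ (fun f _ => by fun_prop)]
  congr 1
  refine sum_congr rfl fun f _ => ?_
  rw [Measure.map_apply (hf f) hs, ← lintegral_indicator_one (hf f hs)]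
  rfl

end EmpiricalMeasure

lemma Equiv.Perm.exists_comp_eq_of_injective {ι κ : Type*} [Finite κ] {f g : ι → κ}
    (hf : Injective f) (hg : Injective g) : ∃ σ : Equiv.Perm κ, σ ∘ g = f := by
  classical
  let e : Set.range g ≃ Set.range f := (Equiv.ofInjective g hg).symm.trans (Equiv.ofInjective f hf)
  refine ⟨e.extendSubtype, funext fun i => ?_⟩
  rw [comp_apply, e.extendSubtype_apply_of_mem _ ⟨i, rfl⟩]
  simp [e, Equiv.ofInjective_symm_apply]

lemma map_comp_eq_of_injective {α ι κ : Type*} [MeasurableSpace α] [Finite κ]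
    {G : Measure (κ → α)} (hsym : ∀ σ : Equiv.Perm κ, G.map (fun X => X ∘ σ) = G)
    {f g : ι → κ} (hf : Injective f) (hg : Injective g) :
    G.map (fun X => X ∘ f) = G.map (fun X => X ∘ g) := by
  obtain ⟨σ, rfl⟩ := Equiv.Perm.exists_comp_eq_of_injective hf hg
  conv_rhs => rw [← hsym σ]
  rw [Measure.map_map (by fun_prop) (by fun_prop)]
  rfl

lemma Nat.pow_succ_le_descFactorial_succ_add (N : ℕ) :
    ∀ j : ℕ, N ^ (j + 1) ≤ N.descFactorial (j + 1) + (j + 1) * j * N ^ j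
  | 0 => by simp
  | j + 1 => by
    have hD := N.descFactorial_le_pow (j + 1)
    have hN : N ≤ N - (j + 1) + (j + 1) := le_tsub_add
    rw [Nat.descFactorial_succ, pow_succ N (j + 1)]
    calc N ^ (j + 1) * N
        ≤ (N.descFactorial (j + 1) + (j + 1) * j * N ^ j) * N := by
          gcongr; exact Nat.pow_succ_le_descFactorial_succ_add N j
      _ = N.descFactorial (j + 1) * N + (j + 1) * j * N ^ (j + 1) := by ring
      _ ≤ N.descFactorial (j + 1) * (N - (j + 1) + (j + 1)) + (j + 1) * j * N ^ (j + 1) := by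
          gcongr
      _ ≤ (N - (j + 1)) * N.descFactorial (j + 1) + (j + 1 + 1) * (j + 1) * N ^ (j + 1) := by
          nlinarith

lemma card_not_injective_le (j N : ℕ) :
    #{f : Fin (j + 1) → Fin N | ¬Injective f} ≤ (j + 1) * j * N ^ j := by
  have hinj : #{f : Fin (j + 1) → Fin N | Injective f} = N.descFactorial (j + 1) := by
    rw [← Fintype.card_subtype, Fintype.card_congr (Equiv.subtypeInjectiveEquivEmbedding _ _),
      Fintype.card_embedding_eq, Fintype.card_fin, Fintype.card_fin]
  have hall :=
    card_filter_add_card_filter_not (s := univ) (fun f : Fin (j + 1) → Fin N => Injective f)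
  rw [card_univ, Fintype.card_fun, Fintype.card_fin, Fintype.card_fin, hinj] at hall
  have := Nat.pow_succ_le_descFactorial_succ_add N j
  omega

lemma ENNReal.inv_natCast_pow_mul_pow {N : ℕ} (hN : N ≠ 0) (j : ℕ) :
    (N : ℝ≥0∞)⁻¹ ^ j * (N : ℝ≥0∞) ^ j = 1 := by
  rw [← mul_pow, ENNReal.inv_mul_cancel (by simpa) (natCast_ne_top N), one_pow]

lemma inv_pow_mul_card_not_injective_le {j N : ℕ} (hjN : j ≤ N) :
    (N : ℝ≥0∞)⁻¹ ^ j * #{f : Fin j → Fin N | ¬Injective f} ≤ ((j * (j - 1) : ℕ) : ℝ≥0∞) / N := by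
  rcases j with _ | k
  · simp [Function.injective_of_subsingleton]
  have hN : N ≠ 0 := by omega
  calc (N : ℝ≥0∞)⁻¹ ^ (k + 1) * #{f : Fin (k + 1) → Fin N | ¬Injective f}
      ≤ (N : ℝ≥0∞)⁻¹ ^ (k + 1) * ((k + 1) * k * N ^ k : ℕ) := by
        gcongr
        exact_mod_cast card_not_injective_le k N
    _ = ((k + 1) * k : ℕ) * (N : ℝ≥0∞)⁻¹ * ((N : ℝ≥0∞)⁻¹ ^ k * (N : ℝ≥0∞) ^ k) := by
        push_cast; ring
    _ = ((k + 1) * (k + 1 - 1) : ℕ) / N := by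
        rw [ENNReal.inv_natCast_pow_mul_pow hN, mul_one, div_eq_mul_inv, Nat.add_sub_cancel]

lemma tvDist_le_two_mul {Ω : Type*} [MeasurableSpace Ω] {μ ν : Measure Ω} {c : ℝ≥0∞}
    (hμν : ∀ s, MeasurableSet s → μ s ≤ ν s + c) (hνμ : ∀ s, MeasurableSet s → ν s ≤ μ s + c) :
    tvDist μ ν ≤ 2 * c := by
  unfold tvDist
  gcongr
  exact iSup₂_le fun s hs =>
    max_le (tsub_le_iff_left.2 (hμν s hs)) (tsub_le_iff_left.2 (hνμ s hs))

section Averaging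

variable {ι : Type*} [Fintype ι] {w a : ℝ≥0∞} {b : ι → ℝ≥0∞} {B : Finset ι}

lemma mul_sum_le_add_mul_card (hw : w * Fintype.card ι = 1) (hb : ∀ i, b i ≤ 1)
    (hbB : ∀ i ∉ B, b i = a) : w * ∑ i, b i ≤ a + w * #B := by
  classical
  have hB : ∑ i ∈ B, b i ≤ #B := by simpa using sum_le_sum fun i (_ : i ∈ B) => hb i
  have hBc : ∑ i ∈ Bᶜ, b i = #Bᶜ * a := by
    rw [sum_congr rfl fun i hi => hbB i (mem_compl.1 hi), sum_const, nsmul_eq_mul]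
  have hwBc : w * #Bᶜ ≤ 1 := hw ▸ by gcongr; exact card_le_univ _
  calc w * ∑ i, b i = w * ∑ i ∈ B, b i + w * #Bᶜ * a := by
        rw [← sum_add_sum_compl B, mul_add, hBc, mul_assoc]
    _ ≤ w * #B + 1 * a := by gcongr
    _ = a + w * #B := by rw [one_mul, add_comm]

lemma le_mul_sum_add_mul_card (hw : w * Fintype.card ι = 1) (ha : a ≤ 1)
    (hbB : ∀ i ∉ B, b i = a) : a ≤ w * ∑ i, b i + w * #B := by
  classical
  have hBc : ∑ i ∈ Bᶜ, b i = #Bᶜ * a := by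
    rw [sum_congr rfl fun i hi => hbB i (mem_compl.1 hi), sum_const, nsmul_eq_mul]
  calc a = w * (#B + #Bᶜ : ℕ) * a := by rw [card_add_card_compl, hw, one_mul]
    _ = w * (#Bᶜ * a) + w * #B * a := by push_cast; ring
    _ ≤ w * ∑ i, b i + w * #B := by
        refine add_le_add ?_ (mul_le_of_le_one_right' ha)
        gcongr
        exact hBc ▸ sum_le_sum_of_subset (subset_univ _)

end Averaging

theorem stmt4_general (d N j : ℕ) (hjN : j ≤ N)
    (G : Measure (Fin N → EuclideanSpace ℝ (Fin d))) [IsProbabilityMeasure G]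
    (hsym : ∀ σ : Equiv.Perm (Fin N), G.map (fun X => X ∘ σ) = G) :
    tvDist (marg d N j hjN G)
        (G.bind fun X => Measure.pi fun _ : Fin j => empMeas X) ≤
      ((2 * j * (j - 1) : ℕ) : ℝ≥0∞) / (N : ℝ≥0∞) := by
  have hw : (N : ℝ≥0∞)⁻¹ ^ j * Fintype.card (Fin j → Fin N) = 1 := by
    rcases eq_or_ne N 0 with rfl | hN
    · simp [Nat.le_zero.1 hjN]
    · simpa using ENNReal.inv_natCast_pow_mul_pow hN j
  have hmarg : ∀ f : Fin j → Fin N, f ∉ ({f | ¬Injective f} : Finset _) →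
      G.map (· ∘ f) = marg d N j hjN G :=
    fun f hf => map_comp_eq_of_injective hsym (by simpa using hf) (Fin.castLE_injective hjN)
  have : IsProbabilityMeasure (marg d N j hjN G) := Measure.isProbabilityMeasure_map
    (measurable_pi_lambda _ fun _ => measurable_pi_apply _).aemeasurable
  calc tvDist _ _ ≤ 2 * ((N : ℝ≥0∞)⁻¹ ^ j * #{f : Fin j → Fin N | ¬Injective f}) := by
        refine tvDist_le_two_mul (fun s hs => ?_) (fun s hs => ?_) <;>
          rw [bind_pi_empMeas_apply G j hs]
        · exact le_mul_sum_add_mul_card hw prob_le_one fun f hf => by rw [hmarg f hf]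
        · exact mul_sum_le_add_mul_card hw (fun f => prob_le_one) fun f hf => by rw [hmarg f hf]
    _ ≤ 2 * (((j * (j - 1) : ℕ) : ℝ≥0∞) / N) := by
        gcongr; exact inv_pow_mul_card_not_injective_le hjN
    _ = ((2 * j * (j - 1) : ℕ) : ℝ≥0∞) / N := by
        rw [mul_assoc, Nat.cast_mul 2, Nat.cast_ofNat, mul_div_assoc]

/-- For a symmetric probability measure `G^N` on `E^N` and `1 ≤ j ≤ 1 + N/2`,
the `j`-th marginal `G^N_j` and the `j`-th moment measure `Ĝ^N_j` of the empirical law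
satisfy `‖G^N_j − Ĝ^N_j‖_TV ≤ 2 j(j−1)/N`. -/
theorem stmt4 (d N j : ℕ) (hj : 1 ≤ j) (hjN : j ≤ N) (hjN2 : (j : ℝ) ≤ 1 + (N : ℝ) / 2)
    (G : Measure (Fin N → EuclideanSpace ℝ (Fin d))) [IsProbabilityMeasure G]
    (hsym : ∀ σ : Equiv.Perm (Fin N), G.map (fun X => X ∘ σ) = G) :
    tvDist (marg d N j hjN G)
        (G.bind fun X => Measure.pi fun _ : Fin j => empMeas X) ≤
      ((2 * j * (j - 1) : ℕ) : ℝ≥0∞) / (N : ℝ≥0∞) :=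
  stmt4_general d N j hjN G hsym
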